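/- Let ν be a norm on R^2 and η(x1,x2,x3) = max(ν(x1,x2),|x3|). For x ∈ R^2 let Λ_x = u_x Z^3 where u_x is the unipotent upper-triangular matrix with (1,3)-entry x1 and (2,3)-entry x2, and let a_s = diag(e^{s/2}, e^{s/2}, e^{-s}). For c > 0, the condition c_ν(x) < c (where c_ν(x) = limsup_{t→∞} t · (min_{1≤q≤t} dist_ν(qx, Z^2))^2) holds if and only if there exists r < c^{1/3} such that for all sufficiently large s, the lattice a_s Λ_x contains a nonzero vector v with η(v) ≤ r. -/

import Mathlib

noncomputable def cylNorm (ν : (Fin 2 → ℝ) → ℝ) (x : Fin 3 → ℝ) : ℝ :=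
  max (ν ![x 0, x 1]) |x 2|

def latticeOf {n : ℕ} (M : Matrix (Fin n) (Fin n) ℝ) : Set (Fin n → ℝ) :=
  {x | ∃ k : Fin n → ℤ, x = M.mulVec fun i => (k i : ℝ)}

/-- Distance from `y ∈ ℝ²` to `ℤ²` measured by the norm `ν`. -/
noncomputable def distNu (ν : (Fin 2 → ℝ) → ℝ) (y : Fin 2 → ℝ) : ℝ :=
  sInf {d | ∃ p : Fin 2 → ℤ, d = ν (y - fun i => (p i : ℝ))}

/-- `min_{1 ≤ q ≤ t} dist_ν(q x, ℤ²)`. -/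
noncomputable def minDist (ν : (Fin 2 → ℝ) → ℝ) (x : Fin 2 → ℝ) (t : ℝ) : ℝ :=
  sInf {d | ∃ q : ℤ, 1 ≤ q ∧ (q : ℝ) ≤ t ∧ d = distNu ν fun i => (q : ℝ) * x i}

/-- `c_ν(x) = limsup_{t → ∞} t · (min_{1 ≤ q ≤ t} dist_ν(q x, ℤ²))²`. -/
noncomputable def cNu (ν : (Fin 2 → ℝ) → ℝ) (x : Fin 2 → ℝ) : ℝ :=
  Filter.limsup (fun t : ℝ => t * (minDist ν x t) ^ 2) Filter.atTop

noncomputable def uMat (x : Fin 2 → ℝ) : Matrix (Fin 3) (Fin 3) ℝ :=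
  !![1, 0, x 0; 0, 1, x 1; 0, 0, 1]

noncomputable def aMat (s : ℝ) : Matrix (Fin 3) (Fin 3) ℝ :=
  !![Real.exp (s / 2), 0, 0; 0, Real.exp (s / 2), 0; 0, 0, Real.exp (-s)]

/-! ### Auxiliary lemmas -/

lemma mulVec_eval (s : ℝ) (x : Fin 2 → ℝ) (k : Fin 3 → ℤ) :
    (aMat s * uMat x).mulVec (fun i => (k i : ℝ)) =
      ![Real.exp (s/2) * (k 0 + k 2 * x 0), Real.exp (s/2) * (k 1 + k 2 * x 1),
        Real.exp (-s) * k 2] := by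
  funext i
  fin_cases i <;>
    simp [aMat, uMat, Matrix.mulVec, Matrix.mul_apply, dotProduct,
      Fin.sum_univ_three] <;> ring

section NuBasic

set_option linter.unusedSectionVars false

variable (ν : (Fin 2 → ℝ) → ℝ)
variable (hν0 : ∀ y, ν y = 0 ↔ y = 0)
variable (hνs : ∀ (a : ℝ) y, ν (a • y) = |a| * ν y)
variable (hνt : ∀ y z, ν (y + z) ≤ ν y + ν z)

include hν0 hνs hνt

lemma nu_zero : ν 0 = 0 := (hν0 0).2 rfl

lemma nu_neg (y) : ν (-y) = ν y := by
  have := hνs (-1) y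
  simpa using this

lemma nu_nonneg (y) : 0 ≤ ν y := by
  have h := hνt y (-y)
  rw [add_neg_cancel, nu_zero ν hν0 hνs hνt, nu_neg ν hν0 hνs hνt] at h
  linarith

lemma nu_lip (y z) : |ν y - ν z| ≤ ν (y - z) := by
  have h1 := hνt z (y - z)
  have h2 := hνt y (z - y)
  rw [add_sub_cancel] at h1
  rw [add_sub_cancel] at h2
  have h3 : ν (z - y) = ν (y - z) := by
    rw [← nu_neg ν hν0 hνs hνt (y - z)]; ring_nf
  rw [abs_sub_le_iff]; constructor <;> linarith

lemma nu_le (y) : ν y ≤ (ν ![1,0] + ν ![0,1]) * ‖y‖ := by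
  have hy : y = y 0 • ![1,0] + y 1 • ![0,1] := by
    funext i; fin_cases i <;> simp
  calc ν y ≤ ν (y 0 • ![1,0]) + ν (y 1 • ![0,1]) := by
        nth_rewrite 1 [hy]; exact hνt _ _
    _ = |y 0| * ν ![1,0] + |y 1| * ν ![0,1] := by rw [hνs, hνs]
    _ ≤ ‖y‖ * ν ![1,0] + ‖y‖ * ν ![0,1] := by
        have h0 : |y 0| ≤ ‖y‖ := by
          simpa using norm_le_pi_norm y 0
        have h1 : |y 1| ≤ ‖y‖ := by
          simpa using norm_le_pi_norm y 1
        have := nu_nonneg ν hν0 hνs hνt ![1,0]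
        have := nu_nonneg ν hν0 hνs hνt ![0,1]
        nlinarith
    _ = _ := by ring

lemma nu_continuous : Continuous ν := by
  set K := ν ![1,0] + ν ![0,1] with hK
  have hK0 : 0 ≤ K := by
    have := nu_nonneg ν hν0 hνs hνt ![1,0]
    have := nu_nonneg ν hν0 hνs hνt ![0,1]
    linarith
  have : LipschitzWith (Real.toNNReal K) ν := by
    apply LipschitzWith.of_dist_le_mul
    intro y z
    rw [Real.dist_eq, dist_eq_norm]
    calc |ν y - ν z| ≤ ν (y - z) := nu_lip ν hν0 hνs hνt y z
      _ ≤ K * ‖y - z‖ := nu_le ν hν0 hνs hνt _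
      _ = (Real.toNNReal K : ℝ) * ‖y - z‖ := by rw [Real.coe_toNNReal _ hK0]
  exact this.continuous

lemma nu_lower : ∃ m > 0, ∀ y : Fin 2 → ℝ, m * ‖y‖ ≤ ν y := by
  have hcomp : IsCompact (Metric.sphere (0 : Fin 2 → ℝ) 1) := isCompact_sphere 0 1
  have hne : (Metric.sphere (0 : Fin 2 → ℝ) 1).Nonempty :=
    NormedSpace.sphere_nonempty.2 zero_le_one
  obtain ⟨y₀, hy₀m, hy₀'⟩ := hcomp.exists_isMinOn hne
    ((nu_continuous ν hν0 hνs hνt).continuousOn)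
  have hy₀ : ∀ y ∈ Metric.sphere (0 : Fin 2 → ℝ) 1, ν y₀ ≤ ν y := fun y hy => hy₀' hy
  have hy₀n : ‖y₀‖ = 1 := by simpa using hy₀m
  have hm : 0 < ν y₀ := by
    rcases (nu_nonneg ν hν0 hνs hνt y₀).lt_or_eq with h | h
    · exact h
    · exfalso
      have := (hν0 y₀).1 h.symm
      rw [this] at hy₀n; simp at hy₀n
  refine ⟨ν y₀, hm, fun y => ?_⟩
  rcases eq_or_ne y 0 with rfl | hy
  · simp [nu_zero ν hν0 hνs hνt]
  · have hyn : 0 < ‖y‖ := norm_pos_iff.2 hy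
    have hmem : ‖y‖⁻¹ • y ∈ Metric.sphere (0 : Fin 2 → ℝ) 1 := by
      simp [norm_smul, abs_of_pos (inv_pos.2 hyn), inv_mul_cancel₀ hyn.ne']
    have := hy₀ _ hmem
    have h2 : ν (‖y‖⁻¹ • y) = ‖y‖⁻¹ * ν y := by
      rw [hνs]; rw [abs_of_pos (inv_pos.2 hyn)]
    rw [h2] at this
    calc ν y₀ * ‖y‖ ≤ (‖y‖⁻¹ * ν y) * ‖y‖ := by nlinarith
      _ = ν y := by field_simp

/-- Lower bound on nonzero integer vectors. -/
lemma nu_int_lower : ∃ m > 0, ∀ p : Fin 2 → ℤ, p ≠ 0 → m ≤ ν fun i => (p i : ℝ) := by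
  obtain ⟨m, hm, hml⟩ := nu_lower ν hν0 hνs hνt
  refine ⟨m, hm, fun p hp => ?_⟩
  have : ∃ i, p i ≠ 0 := by
    by_contra h
    push_neg at h
    exact hp (funext h)
  obtain ⟨i, hi⟩ := this
  have h1 : (1:ℝ) ≤ ‖fun j => (p j : ℝ)‖ := by
    have := norm_le_pi_norm (fun j => (p j : ℝ)) i
    have h2 : (1:ℝ) ≤ ‖((p i : ℝ))‖ := by
      rw [Real.norm_eq_abs]
      exact_mod_cast Int.one_le_abs hi
    linarith
  calc m = m * 1 := (mul_one m).symm
    _ ≤ m * ‖fun j => (p j : ℝ)‖ := by nlinarith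
    _ ≤ _ := hml _

end NuBasic

section DistBasic

set_option linter.unusedSectionVars false

variable (ν : (Fin 2 → ℝ) → ℝ) (hνn : ∀ y, 0 ≤ ν y)
include hνn

lemma distNu_nonneg (y) : 0 ≤ distNu ν y :=
  Real.sInf_nonneg (by rintro d ⟨p, rfl⟩; exact hνn _)

lemma distNu_le (y) (p : Fin 2 → ℤ) : distNu ν y ≤ ν (y - fun i => (p i : ℝ)) :=
  csInf_le ⟨0, by rintro d ⟨p, rfl⟩; exact hνn _⟩ ⟨p, rfl⟩

lemma distNu_lt (y) {ε : ℝ} (h : distNu ν y < ε) :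
    ∃ p : Fin 2 → ℤ, ν (y - fun i => (p i : ℝ)) < ε := by
  have hne : {d | ∃ p : Fin 2 → ℤ, d = ν (y - fun i => (p i : ℝ))}.Nonempty :=
    ⟨_, 0, rfl⟩
  obtain ⟨d, ⟨p, rfl⟩, hd⟩ := exists_lt_of_csInf_lt hne h
  exact ⟨p, hd⟩

lemma minDist_nonneg (x t) : 0 ≤ minDist ν x t :=
  Real.sInf_nonneg (by rintro d ⟨q, _, _, rfl⟩; exact distNu_nonneg ν hνn _)

lemma minDist_le (x t) {q : ℤ} (h1 : 1 ≤ q) (h2 : (q : ℝ) ≤ t) :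
    minDist ν x t ≤ distNu ν fun i => (q : ℝ) * x i :=
  csInf_le ⟨0, by rintro d ⟨q, _, _, rfl⟩; exact distNu_nonneg ν hνn _⟩ ⟨q, h1, h2, rfl⟩

lemma minDist_lt (x) {t ε : ℝ} (ht : 1 ≤ t) (h : minDist ν x t < ε) :
    ∃ q : ℤ, 1 ≤ q ∧ (q : ℝ) ≤ t ∧ distNu ν (fun i => (q : ℝ) * x i) < ε := by
  have hne : {d | ∃ q : ℤ, 1 ≤ q ∧ (q : ℝ) ≤ t ∧
      d = distNu ν fun i => (q : ℝ) * x i}.Nonempty :=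
    ⟨_, 1, le_refl (1:ℤ), by simpa using ht, rfl⟩
  obtain ⟨d, ⟨q, h1, h2, rfl⟩, hd⟩ := exists_lt_of_csInf_lt hne h
  exact ⟨q, h1, h2, hd⟩

end DistBasic

/-- Dirichlet-type pigeonhole. -/
lemma dirichlet (x : Fin 2 → ℝ) (N : ℕ) (hN : 1 ≤ N) :
    ∃ (q : ℤ) (p : Fin 2 → ℤ), 1 ≤ q ∧ (q : ℝ) ≤ (N:ℝ)^2 ∧
      ∀ i, |(q:ℝ) * x i - p i| < 1 / N := by
  have hN0 : (0:ℝ) < N := by exact_mod_cast hN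
  set cell : ℕ → ℤ × ℤ := fun n =>
    (⌊(N:ℝ) * Int.fract (n * x 0)⌋, ⌊(N:ℝ) * Int.fract (n * x 1)⌋) with hcell
  have hmaps : ∀ n ∈ Finset.range (N^2+1), cell n ∈
      Finset.Ico (0:ℤ) N ×ˢ Finset.Ico (0:ℤ) N := by
    intro n _
    have h : ∀ y : ℝ, ⌊(N:ℝ) * Int.fract y⌋ ∈ Finset.Ico (0:ℤ) N := by
      intro y
      rw [Finset.mem_Ico]
      constructor
      · exact Int.floor_nonneg.2 (mul_nonneg (le_of_lt hN0) (Int.fract_nonneg y))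
      · rw [Int.floor_lt]
        push_cast
        have := Int.fract_lt_one y
        have := Int.fract_nonneg y
        nlinarith
    exact Finset.mem_product.2 ⟨h _, h _⟩
  have hcard : (Finset.Ico (0:ℤ) N ×ˢ Finset.Ico (0:ℤ) N).card <
      (Finset.range (N^2+1)).card := by
    simp [Finset.card_range, pow_two]
  obtain ⟨a, ha, b, hb, hab, heq⟩ :=
    Finset.exists_ne_map_eq_of_card_lt_of_maps_to hcard hmaps
  wlog hlt : a < b generalizing a b
  · exact this b hb a ha hab.symm heq.symm (by omega)
  refine ⟨(b:ℤ) - a, fun i => ⌊(b:ℝ) * x i⌋ - ⌊(a:ℝ) * x i⌋, by omega, ?_, ?_⟩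
  · have hb' : b ≤ N^2 := by
      have := Finset.mem_range.1 hb; omega
    push_cast
    have : (b:ℝ) ≤ (N:ℝ)^2 := by exact_mod_cast hb'
    linarith [Nat.cast_nonneg (α := ℝ) a]
  · intro i
    have heqi : ⌊(N:ℝ) * Int.fract ((a:ℝ) * x i)⌋ = ⌊(N:ℝ) * Int.fract ((b:ℝ) * x i)⌋ := by
      fin_cases i
      · exact congrArg Prod.fst heq
      · exact congrArg Prod.snd heq
    have habs : |(N:ℝ) * Int.fract ((a:ℝ) * x i) - (N:ℝ) * Int.fract ((b:ℝ) * x i)| < 1 :=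
      Int.abs_sub_lt_one_of_floor_eq_floor heqi
    have hkey : ((((b:ℤ) - (a:ℤ)) : ℤ) : ℝ) * x i
          - ((⌊(b:ℝ) * x i⌋ - ⌊(a:ℝ) * x i⌋ : ℤ) : ℝ)
        = Int.fract ((b:ℝ) * x i) - Int.fract ((a:ℝ) * x i) := by
      rw [Int.fract, Int.fract]; push_cast; ring
    beta_reduce
    rw [hkey]
    rw [abs_sub_comm, ← mul_sub, abs_mul, abs_of_pos hN0] at habs
    rw [lt_div_iff₀ hN0]
    linarith

/-- Dirichlet boundedness of `t ↦ t · minDist(t)²`. -/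
lemma f_bounded (ν : (Fin 2 → ℝ) → ℝ)
    (hν0 : ∀ y, ν y = 0 ↔ y = 0)
    (hνs : ∀ (a : ℝ) y, ν (a • y) = |a| * ν y)
    (hνt : ∀ y z, ν (y + z) ≤ ν y + ν z)
    (x : Fin 2 → ℝ) :
    ∀ t : ℝ, 1 ≤ t → t * (minDist ν x t)^2 ≤ 4 * (ν ![1,0] + ν ![0,1])^2 := by
  intro t ht
  have hνn := nu_nonneg ν hν0 hνs hνt
  set C := ν ![1,0] + ν ![0,1] with hC
  have hC0 : 0 ≤ C := by
    have := hνn ![1,0]; have := hνn ![0,1]; rw [hC]; linarith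
  have ht0 : (0:ℝ) < t := by linarith
  set N := ⌊Real.sqrt t⌋₊ with hNdef
  have hst : 1 ≤ Real.sqrt t := by
    rw [show (1:ℝ) = Real.sqrt 1 by simp]
    exact Real.sqrt_le_sqrt ht
  have hN1 : 1 ≤ N := Nat.le_floor (by exact_mod_cast hst)
  have hNr : (0:ℝ) < N := by exact_mod_cast hN1
  have hN2 : ((N:ℝ))^2 ≤ t := by
    have h1 : (N:ℝ) ≤ Real.sqrt t := Nat.floor_le (Real.sqrt_nonneg t)
    nlinarith [Real.sq_sqrt ht0.le, Real.sqrt_nonneg t]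
  have hNge : Real.sqrt t ≤ 2 * N := by
    have h1 : Real.sqrt t < N + 1 := Nat.lt_floor_add_one _
    have : (1:ℝ) ≤ N := by exact_mod_cast hN1
    linarith
  have ht4 : t ≤ 4 * (N:ℝ)^2 := by
    nlinarith [Real.sq_sqrt ht0.le, Real.sqrt_nonneg t]
  obtain ⟨q, p, hq1, hq2, hqp⟩ := dirichlet x N hN1
  have hd : distNu ν (fun i => (q:ℝ) * x i) ≤ C * (1 / N) := by
    refine le_trans (distNu_le ν hνn _ p) ?_
    refine le_trans (nu_le ν hν0 hνs hνt _) ?_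
    have hnorm : ‖(fun i => (q:ℝ) * x i) - fun i => (p i : ℝ)‖ ≤ 1 / N := by
      rw [pi_norm_le_iff_of_nonneg (by positivity)]
      intro i
      rw [Pi.sub_apply, Real.norm_eq_abs]
      exact (hqp i).le
    have := mul_le_mul_of_nonneg_left hnorm hC0
    linarith
  have hmd : minDist ν x t ≤ C * (1 / N) := by
    refine le_trans (minDist_le ν hνn x t hq1 (le_trans hq2 hN2)) hd
  have hmd0 : 0 ≤ minDist ν x t := minDist_nonneg ν hνn x t
  have hsq : (minDist ν x t)^2 ≤ (C * (1/N))^2 := by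
    exact pow_le_pow_left₀ hmd0 hmd 2
  calc t * (minDist ν x t)^2 ≤ (4 * (N:ℝ)^2) * (C * (1/N))^2 := by
        apply mul_le_mul ht4 hsq (by positivity) (by positivity)
    _ = 4 * C^2 := by field_simp

set_option maxHeartbeats 1000000 in
theorem stmt6 (ν : (Fin 2 → ℝ) → ℝ)
    (hν0 : ∀ y, ν y = 0 ↔ y = 0)
    (hνs : ∀ (a : ℝ) y, ν (a • y) = |a| * ν y)
    (hνt : ∀ y z, ν (y + z) ≤ ν y + ν z)
    (x : Fin 2 → ℝ) (c : ℝ) (hc : 0 < c) :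
    cNu ν x < c ↔
      ∃ r : ℝ, r < c ^ ((1 : ℝ) / 3) ∧
        ∀ᶠ s : ℝ in Filter.atTop,
          ∃ v ∈ latticeOf (aMat s * uMat x), v ≠ 0 ∧ cylNorm ν v ≤ r := by
  have hνn := nu_nonneg ν hν0 hνs hνt
  set f : ℝ → ℝ := fun t => t * (minDist ν x t)^2 with hfdef
  have hB : ∀ t : ℝ, 1 ≤ t → f t ≤ 4 * (ν ![1,0] + ν ![0,1])^2 :=
    f_bounded ν hν0 hνs hνt x
  have hbdd : Filter.IsBoundedUnder (· ≤ ·) Filter.atTop f := by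
    refine ⟨4 * (ν ![1,0] + ν ![0,1])^2, ?_⟩
    rw [Filter.eventually_map]
    filter_upwards [Filter.eventually_ge_atTop (1:ℝ)] with t ht using hB t ht
  have hf0 : ∀ᶠ t in Filter.atTop, (0:ℝ) ≤ f t := by
    filter_upwards [Filter.eventually_ge_atTop (0:ℝ)] with t ht
    exact mul_nonneg ht (sq_nonneg _)
  have hcob : Filter.IsCoboundedUnder (· ≤ ·) Filter.atTop f :=
    Filter.isCoboundedUnder_le_of_eventually_le Filter.atTop hf0
  constructor
  · intro h
    set c₁ := (max (cNu ν x) 0 + c) / 2 with hc₁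
    have h01 : 0 < c₁ := by
      have : (0:ℝ) ≤ max (cNu ν x) 0 := le_max_right _ _
      rw [hc₁]; linarith
    have hc₁c : c₁ < c := by
      have : max (cNu ν x) 0 < c := max_lt h hc
      rw [hc₁]; linarith
    have hlim : Filter.limsup f Filter.atTop < c₁ := by
      have h1 : cNu ν x ≤ max (cNu ν x) 0 := le_max_left _ _
      have h2 : cNu ν x < c₁ := by rw [hc₁]; linarith
      exact h2
    have hev : ∀ᶠ t in Filter.atTop, f t < c₁ :=
      Filter.eventually_lt_of_limsup_lt hlim hbdd
    obtain ⟨t₀, ht₀⟩ := Filter.eventually_atTop.1 hev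
    set r := c₁ ^ ((1:ℝ)/3) with hrdef
    have hr0 : 0 < r := Real.rpow_pos_of_pos h01 _
    have hrc : r < c ^ ((1:ℝ)/3) := Real.rpow_lt_rpow h01.le hc₁c (by norm_num)
    have hr3 : r ^ (3:ℕ) = c₁ := by
      rw [hrdef, ← Real.rpow_natCast (c₁ ^ ((1:ℝ)/3)) 3, ← Real.rpow_mul h01.le]
      norm_num
    refine ⟨r, hrc, ?_⟩
    set M := max t₀ 1 with hM
    have hM0 : 0 < M := lt_of_lt_of_le one_pos (le_max_right _ _)
    filter_upwards [Filter.eventually_ge_atTop (Real.log (M / r))] with s hs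
    have hts : M / r ≤ Real.exp s := by
      rw [← Real.exp_log (by positivity : (0:ℝ) < M / r)]
      exact Real.exp_le_exp.2 hs
    set t := Real.exp s * r with htdef
    have htM : M ≤ t := by
      rw [htdef]
      calc M = (M / r) * r := by field_simp
        _ ≤ Real.exp s * r := by nlinarith
    have ht1 : 1 ≤ t := le_trans (le_max_right _ _) htM
    have ht0' : (0:ℝ) < t := lt_of_lt_of_le one_pos ht1
    have hft : f t < c₁ := ht₀ t (le_trans (le_max_left _ _) htM)
    have hmd0 : 0 ≤ minDist ν x t := minDist_nonneg ν hνn x t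
    set E := r * Real.exp (-(s/2)) with hE
    have hE0 : 0 < E := by rw [hE]; positivity
    have hexp : Real.exp (-(s/2)) ^ (2:ℕ) * Real.exp s = 1 := by
      rw [← Real.exp_nat_mul, ← Real.exp_add]; push_cast; ring_nf; rw [Real.exp_zero]
    have hEsq : E ^ 2 * t = c₁ := by
      calc E ^ 2 * t = (r * Real.exp (-(s/2)))^2 * (Real.exp s * r) := by rw [hE, htdef]
        _ = r^(3:ℕ) * (Real.exp (-(s/2)) ^ (2:ℕ) * Real.exp s) := by ring
        _ = r^(3:ℕ) := by rw [hexp, mul_one]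
        _ = c₁ := hr3
    have hmdE : minDist ν x t < E := by
      have hft' : t * (minDist ν x t)^2 < c₁ := hft
      have h2 : (minDist ν x t)^2 < E^2 := by nlinarith
      exact lt_of_pow_lt_pow_left₀ 2 hE0.le h2
    obtain ⟨q, hq1, hq2, hqd⟩ := minDist_lt ν hνn x ht1 hmdE
    obtain ⟨p, hp⟩ := distNu_lt ν hνn _ hqd
    set k : Fin 3 → ℤ := ![-p 0, -p 1, q] with hk
    have hq0 : (1:ℝ) ≤ (q:ℝ) := by exact_mod_cast hq1
    refine ⟨(aMat s * uMat x).mulVec (fun i => (k i : ℝ)), ⟨k, rfl⟩, ?_, ?_⟩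
    · intro h0
      have h2 := congrFun h0 2
      rw [mulVec_eval] at h2
      have h3 : Real.exp (-s) * ((k 2 : ℤ) : ℝ) = 0 := h2
      have hq : ((k 2 : ℤ) : ℝ) = (q : ℝ) := by simp [hk]
      rw [hq] at h3
      rcases mul_eq_zero.1 h3 with h4 | h4
      · exact Real.exp_ne_zero _ h4
      · rw [h4] at hq0; norm_num at hq0
    · rw [mulVec_eval]
      show max (ν ![Real.exp (s/2) * ((k 0 : ℝ) + (k 2 : ℝ) * x 0),
          Real.exp (s/2) * ((k 1 : ℝ) + (k 2 : ℝ) * x 1)])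
          |Real.exp (-s) * (k 2 : ℝ)| ≤ r
      have hee : Real.exp (s/2) * Real.exp (-(s/2)) = 1 := by
        rw [← Real.exp_add]; norm_num
      apply max_le
      · have hsmul : (![Real.exp (s/2) * ((k 0:ℝ) + (k 2:ℝ) * x 0),
            Real.exp (s/2) * ((k 1:ℝ) + (k 2:ℝ) * x 1)] : Fin 2 → ℝ)
            = Real.exp (s/2) • ((fun i => (q:ℝ) * x i) - fun i => (p i : ℝ)) := by
          funext i; fin_cases i <;> simp [hk] <;> ring
        rw [hsmul, hνs, abs_of_pos (Real.exp_pos _)]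
        have hn := hνn ((fun i => (q:ℝ) * x i) - fun i => (p i : ℝ))
        calc Real.exp (s/2) * ν ((fun i => (q:ℝ) * x i) - fun i => (p i : ℝ))
            ≤ Real.exp (s/2) * E := by nlinarith [Real.exp_pos (s/2), hp.le]
          _ = r * (Real.exp (s/2) * Real.exp (-(s/2))) := by rw [hE]; ring
          _ = r := by rw [hee, mul_one]
      · have hkq : ((k 2 : ℤ):ℝ) = (q:ℝ) := by simp [hk]
        rw [hkq, abs_of_nonneg (by positivity)]
        have he0 : Real.exp (-s) * Real.exp s = 1 := by
          rw [← Real.exp_add]; norm_num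
        calc Real.exp (-s) * (q:ℝ) ≤ Real.exp (-s) * t := by
              nlinarith [Real.exp_pos (-s), hq2]
          _ = r * (Real.exp (-s) * Real.exp s) := by rw [htdef]; ring
          _ = r := by rw [he0, mul_one]
  · rintro ⟨r, hrc, hev⟩
    have hrpos : 0 < r := by
      obtain ⟨s, v, hvm, hv0, hvr⟩ := hev.exists
      by_contra hr
      push_neg at hr
      have h2 : |v 2| ≤ 0 := le_trans (le_trans (le_max_right _ _) hvr) hr
      have hν12 : ν ![v 0, v 1] ≤ 0 := le_trans (le_trans (le_max_left _ _) hvr) hr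
      have h2' : v 2 = 0 := abs_eq_zero.1 (le_antisymm h2 (abs_nonneg _))
      have h12 : (![v 0, v 1] : Fin 2 → ℝ) = 0 := (hν0 _).1 (le_antisymm hν12 (hνn _))
      apply hv0
      funext i; fin_cases i
      · simpa using congrFun h12 0
      · simpa using congrFun h12 1
      · simpa using h2'
    obtain ⟨m, hm0, hm⟩ := nu_int_lower ν hν0 hνs hνt
    obtain ⟨s₀, hs₀⟩ := Filter.eventually_atTop.1 hev
    set s₁ := max s₀ (2 * Real.log (r / m) + 1) with hs₁def
    set T := max (Real.exp s₁ * r) 1 with hTdef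
    have key : ∀ t : ℝ, T ≤ t → f t ≤ r ^ (3:ℕ) := by
      intro t ht
      have ht1 : (1:ℝ) ≤ t := le_trans (le_max_right _ _) ht
      have ht0 : (0:ℝ) < t := by linarith
      set s := Real.log (t / r) with hsdef
      have hts : Real.exp s = t / r := Real.exp_log (by positivity)
      have hst : Real.exp s * r = t := by rw [hts]; field_simp
      have hss₁ : s₁ ≤ s := by
        have h1 : Real.exp s₁ * r ≤ t := le_trans (le_max_left _ _) ht
        have h2 : Real.exp s₁ ≤ Real.exp s := by
          rw [hts, le_div_iff₀ hrpos]; linarith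
        exact Real.exp_le_exp.1 h2
      have hss₀ : s₀ ≤ s := le_trans (le_max_left _ _) hss₁
      obtain ⟨v, ⟨k, hkv⟩, hv0, hvr⟩ := hs₀ s hss₀
      subst hkv
      rw [mulVec_eval] at hv0 hvr
      replace hvr : max (ν ![Real.exp (s/2) * ((k 0 : ℝ) + (k 2 : ℝ) * x 0),
          Real.exp (s/2) * ((k 1 : ℝ) + (k 2 : ℝ) * x 1)])
          |Real.exp (-s) * (k 2 : ℝ)| ≤ r := hvr
      set w : Fin 2 → ℝ := ![(k 2:ℝ) * x 0 + (k 0:ℝ), (k 2:ℝ) * x 1 + (k 1:ℝ)] with hwdef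
      have hee : Real.exp (s/2) * Real.exp (-(s/2)) = 1 := by
        rw [← Real.exp_add]; norm_num
      have hw : ν w ≤ r * Real.exp (-(s/2)) := by
        have hsm : (![Real.exp (s/2) * ((k 0:ℝ) + (k 2:ℝ) * x 0),
            Real.exp (s/2) * ((k 1:ℝ) + (k 2:ℝ) * x 1)] : Fin 2 → ℝ)
            = Real.exp (s/2) • w := by
          funext i; fin_cases i <;> simp [hwdef] <;> ring
        have h1 : ν (Real.exp (s/2) • w) ≤ r := by
          rw [← hsm]; exact le_trans (le_max_left _ _) hvr
        rw [hνs, abs_of_pos (Real.exp_pos _)] at h1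
        nlinarith [Real.exp_pos (-(s/2)), Real.exp_pos (s/2), hνn w]
      have hq' : |(k 2 : ℝ)| ≤ t := by
        have h1 : |Real.exp (-s) * (k 2 : ℝ)| ≤ r := le_trans (le_max_right _ _) hvr
        rw [abs_mul, abs_of_pos (Real.exp_pos _)] at h1
        have hes : Real.exp s * Real.exp (-s) = 1 := by
          rw [← Real.exp_add, add_neg_cancel, Real.exp_zero]
        have h2 := mul_le_mul_of_nonneg_left h1 (Real.exp_pos s).le
        calc |(k 2:ℝ)| = (Real.exp s * Real.exp (-s)) * |(k 2:ℝ)| := by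
              rw [hes, one_mul]
          _ = Real.exp s * (Real.exp (-s) * |(k 2:ℝ)|) := by ring
          _ ≤ Real.exp s * r := h2
          _ = t := hst
      by_cases hk2 : k 2 = 0
      · exfalso
        set pp : Fin 2 → ℤ := ![k 0, k 1] with hpp
        have hppne : pp ≠ 0 := by
          intro hppz
          apply hv0
          have h0 : (k 0 : ℝ) = 0 := by
            have := congrFun hppz 0; simpa [hpp] using this
          have h1 : (k 1 : ℝ) = 0 := by
            have := congrFun hppz 1; simpa [hpp] using this
          funext i; fin_cases i <;> simp [hk2, h0, h1]
        have hmw := hm pp hppne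
        have hweq : (fun i => (pp i:ℝ)) = w := by
          funext i; fin_cases i <;> simp [hpp, hwdef, hk2]
        rw [hweq] at hmw
        have hlt : r * Real.exp (-(s/2)) < m := by
          have h1 : 2 * Real.log (r/m) + 1 ≤ s := le_trans (le_max_right _ _) hss₁
          have h2 : Real.log (r/m) < s / 2 := by linarith
          have h3 : r / m < Real.exp (s/2) := by
            calc r/m = Real.exp (Real.log (r/m)) := (Real.exp_log (by positivity)).symm
              _ < Real.exp (s/2) := Real.exp_lt_exp.2 h2
          have h4 : Real.exp (-(s/2)) = (Real.exp (s/2))⁻¹ := Real.exp_neg _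
          rw [h4, mul_inv_lt_iff₀ (Real.exp_pos _)]
          calc r = (r / m) * m := by field_simp
            _ < Real.exp (s/2) * m := by nlinarith
            _ = m * Real.exp (s/2) := by ring
        linarith
      · set q : ℤ := |k 2| with hqdef
        have hq1 : 1 ≤ q := Int.one_le_abs hk2
        have hqt : (q:ℝ) ≤ t := by
          rw [hqdef]; push_cast [abs]; exact_mod_cast hq'
        have hdist : distNu ν (fun i => (q:ℝ) * x i) ≤ r * Real.exp (-(s/2)) := by
          rcases lt_or_gt_of_ne hk2 with hneg | hpos
          · refine le_trans (distNu_le ν hνn _ ![k 0, k 1]) ?_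
            have heqw : ((fun i => (q:ℝ) * x i) -
                fun i => ((![k 0, k 1] : Fin 2 → ℤ) i : ℝ)) = -w := by
              have hqr : (q:ℝ) = -(k 2:ℝ) := by
                rw [hqdef]; push_cast [abs_of_neg hneg]; ring
              funext i; fin_cases i <;> simp [hwdef, hqr] <;> ring
            rw [heqw, nu_neg ν hν0 hνs hνt]; exact hw
          · refine le_trans (distNu_le ν hνn _ ![-k 0, -k 1]) ?_
            have heqw : ((fun i => (q:ℝ) * x i) -
                fun i => ((![-k 0, -k 1] : Fin 2 → ℤ) i : ℝ)) = w := by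
              have hqr : (q:ℝ) = (k 2:ℝ) := by
                rw [hqdef]; push_cast [abs_of_pos hpos]; ring
              funext i; fin_cases i <;> simp [hwdef, hqr] <;> ring
            rw [heqw]; exact hw
        have hmd : minDist ν x t ≤ r * Real.exp (-(s/2)) :=
          le_trans (minDist_le ν hνn x t hq1 hqt) hdist
        have hmd0 := minDist_nonneg ν hνn x t
        have hexp2 : Real.exp (-(s/2)) ^ (2:ℕ) * Real.exp s = 1 := by
          rw [← Real.exp_nat_mul, ← Real.exp_add]; push_cast; ring_nf; rw [Real.exp_zero]
        have hEt : (r * Real.exp (-(s/2)))^2 * t = r^(3:ℕ) := by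
          calc (r * Real.exp (-(s/2)))^2 * t
              = (r * Real.exp (-(s/2)))^2 * (Real.exp s * r) := by rw [hst]
            _ = r^(3:ℕ) * (Real.exp (-(s/2))^(2:ℕ) * Real.exp s) := by ring
            _ = r^(3:ℕ) := by rw [hexp2, mul_one]
        have : f t = t * (minDist ν x t)^2 := rfl
        rw [this, ← hEt]
        have hsq : (minDist ν x t)^2 ≤ (r * Real.exp (-(s/2)))^2 :=
          pow_le_pow_left₀ hmd0 hmd 2
        nlinarith
    have hev3 : ∀ᶠ t in Filter.atTop, f t ≤ r^(3:ℕ) := by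
      filter_upwards [Filter.eventually_ge_atTop T] with t ht using key t ht
    have hle : cNu ν x ≤ r^(3:ℕ) := Filter.limsup_le_of_le hcob hev3
    have hrc3 : r^(3:ℕ) < c := by
      have h1 : r^(3:ℕ) < (c ^ ((1:ℝ)/3))^(3:ℕ) :=
        pow_lt_pow_left₀ hrc hrpos.le (by norm_num)
      have h2 : (c ^ ((1:ℝ)/3))^(3:ℕ) = c := by
        rw [← Real.rpow_natCast (c ^ ((1:ℝ)/3)) 3, ← Real.rpow_mul hc.le]; norm_num
      linarith
    linarith
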